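/- Let J be an n₁×n₁ real matrix and T > 0. If the homogeneous boundary value problem u̇₁ = J(u₁ + μ₁), u₁(0) = 0, with boundary condition B̃₁ μ₁ + C̃₁(μ₁ + u₁(T)) = 0 has only the trivial solution (μ₁, u₁) = (0, 0), then the matrix D̃ = B̃₁ + C̃₁ + C̃₁ J ∫₀ᵀ e^{(T−s)J} ds is invertible. -/

import Mathlib

/-!
If `D̃ μ = 0`, then `u(t) = (e^{tJ} - 1) μ` solves `u̇ = J (u + μ)` with `u(0) = 0`.
Since `J ∫₀ᵀ e^{(T-s)J} ds = e^{TJ} - 1`, its boundary value is `u(T) = J (∫₀ᵀ e^{(T-s)J} ds) μ`,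
so the boundary condition reads `D̃ μ = 0`. Uniqueness then forces `μ = 0`: `D̃` has trivial
kernel.
-/

open Matrix Set

/-- The matrix `∫₀ᵗ e^{(t−s)J} ds`, computed entrywise. -/
noncomputable def expInt {n : ℕ} (J : Matrix (Fin n) (Fin n) ℝ) (t : ℝ) :
    Matrix (Fin n) (Fin n) ℝ :=
  Matrix.of fun i j => ∫ s in (0:ℝ)..t, NormedSpace.exp ((t - s) • J) i j

open NormedSpace

section ExpSmul

variable {𝕜 m : Type*} [RCLike 𝕜] [Fintype m] [DecidableEq m]

-- Any matrix norm would do: all of them induce the product topology used in the statements.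
attribute [local instance] Matrix.linftyOpNormedRing Matrix.linftyOpNormedAlgebra

theorem continuous_exp_smul (A : Matrix m m 𝕜) : Continuous fun s : 𝕜 => exp (s • A) :=
  exp_continuous.comp (continuous_id.smul continuous_const)

theorem hasDerivAt_exp_smul_apply (A : Matrix m m 𝕜) (i j : m) (t : 𝕜) :
    HasDerivAt (fun s : 𝕜 => exp (s • A) i j) ((A * exp (t • A)) i j) t :=
  (entryLinearMap 𝕜 𝕜 i j).toContinuousLinearMap.hasFDerivAt.comp_hasDerivAt t
    (hasDerivAt_exp_smul_const' A t)

theorem hasDerivAt_exp_smul_mulVec (A : Matrix m m 𝕜) (v : m → 𝕜) (t : 𝕜) :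
    HasDerivAt (fun s : 𝕜 => exp (s • A) *ᵥ v) (A *ᵥ (exp (t • A) *ᵥ v)) t := by
  rw [mulVec_mulVec]
  exact (LinearMap.applyₗ v ∘ₗ (toLin' : Matrix m m 𝕜 ≃ₗ[𝕜] _).toLinearMap
    ).toContinuousLinearMap.hasFDerivAt.comp_hasDerivAt t (hasDerivAt_exp_smul_const' A t)

end ExpSmul

theorem intervalIntegral_mul_exp_smul_apply {m : Type*} [Fintype m] [DecidableEq m]
    (A : Matrix m m ℝ) (i j : m) (t : ℝ) :
    ∫ s in (0:ℝ)..t, (A * exp (s • A)) i j = (exp (t • A) - 1) i j := by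
  rw [intervalIntegral.integral_eq_sub_of_hasDerivAt (fun s _ => hasDerivAt_exp_smul_apply A i j s)
    (((continuous_const.mul (continuous_exp_smul A)).matrix_elem i j).intervalIntegrable 0 t)]
  simp

theorem mul_expInt {n : ℕ} (J : Matrix (Fin n) (Fin n) ℝ) (t : ℝ) :
    J * expInt J t = exp (t • J) - 1 := by
  ext i j
  calc (J * expInt J t) i j = ∫ s in (0:ℝ)..t, (J * exp ((t - s) • J)) i j := by
        simp only [mul_apply, expInt, of_apply, ← intervalIntegral.integral_const_mul]
        refine (intervalIntegral.integral_finsetSum fun k _ => ?_).symm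
        exact (((continuous_exp_smul J).comp (continuous_const.sub continuous_id)).matrix_elem k j
          |>.const_mul (J i k)).intervalIntegrable 0 t
    _ = ∫ s in (0:ℝ)..t, (J * exp (s • J)) i j := by
        simpa using intervalIntegral.integral_comp_sub_left
          (fun s => (J * exp (s • J)) i j) (a := 0) (b := t) t
    _ = (exp (t • J) - 1) i j := intervalIntegral_mul_exp_smul_apply J i j t

theorem stmt_17_general {n₁ : ℕ} (J B₁ C₁ : Matrix (Fin n₁) (Fin n₁) ℝ) (T : ℝ)
    (htriv : ∀ (μ₁ : Fin n₁ → ℝ) (u₁ u₁' : ℝ → Fin n₁ → ℝ),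
      (∀ t ∈ Icc 0 T, HasDerivWithinAt u₁ (u₁' t) (Icc 0 T) t) →
      ContinuousOn u₁' (Icc 0 T) →
      (∀ t ∈ Icc 0 T, u₁' t = J *ᵥ (u₁ t + μ₁)) →
      u₁ 0 = 0 →
      B₁ *ᵥ μ₁ + C₁ *ᵥ (μ₁ + u₁ T) = 0 →
      μ₁ = 0 ∧ ∀ t ∈ Icc (0:ℝ) T, u₁ t = 0) :
    IsUnit (B₁ + C₁ + C₁ * J * expInt J T) := by
  rw [isUnit_iff_isUnit_det, isUnit_iff_ne_zero, ne_eq, ← exists_mulVec_eq_zero_iff]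
  rintro ⟨μ, hμ_ne, hμ⟩
  set u : ℝ → Fin n₁ → ℝ := fun t => exp (t • J) *ᵥ μ - μ with hu
  have hu_deriv (t : ℝ) : HasDerivAt u (J *ᵥ (exp (t • J) *ᵥ μ)) t :=
    (hasDerivAt_exp_smul_mulVec J μ t).sub_const μ
  have hu'_cont : Continuous fun t : ℝ => J *ᵥ (exp (t • J) *ᵥ μ) :=
    continuous_const.matrix_mulVec ((continuous_exp_smul J).matrix_mulVec continuous_const)
  have hu_T : u T = (J * expInt J T) *ᵥ μ := by
    rw [hu, mul_expInt, sub_mulVec, one_mulVec]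
  have hbc : B₁ *ᵥ μ + C₁ *ᵥ (μ + u T) = 0 := by
    rw [hu_T, ← hμ]
    simp only [add_mulVec, mulVec_add, mulVec_mulVec, Matrix.mul_assoc, add_assoc]
  exact hμ_ne (htriv μ u _ (fun t _ => (hu_deriv t).hasDerivWithinAt) hu'_cont.continuousOn
    (fun t _ => by rw [hu, sub_add_cancel]) (by simp [hu]) hbc).1

/-- if the homogeneous BVP has only the trivial solution, then
`D̃ = B̃₁ + C̃₁ + C̃₁ J ∫₀ᵀ e^{(T−s)J} ds` is invertible. -/
theorem stmt_17 {n₁ : ℕ} (J B₁ C₁ : Matrix (Fin n₁) (Fin n₁) ℝ) (T : ℝ) (hT : 0 < T)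
    (htriv : ∀ (μ₁ : Fin n₁ → ℝ) (u₁ u₁' : ℝ → Fin n₁ → ℝ),
      (∀ t ∈ Icc 0 T, HasDerivWithinAt u₁ (u₁' t) (Icc 0 T) t) →
      ContinuousOn u₁' (Icc 0 T) →
      (∀ t ∈ Icc 0 T, u₁' t = J *ᵥ (u₁ t + μ₁)) →
      u₁ 0 = 0 →
      B₁ *ᵥ μ₁ + C₁ *ᵥ (μ₁ + u₁ T) = 0 →
      μ₁ = 0 ∧ ∀ t ∈ Icc (0:ℝ) T, u₁ t = 0) :
    IsUnit (B₁ + C₁ + C₁ * J * expInt J T) :=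
  stmt_17_general J B₁ C₁ T htriv
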